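/- The right ideal I = ⟨q₁²+1, q₂²+1⟩ generated by q₁²+1 and q₂²+1 in the ring (ℍ[q₁,q₂], +, *) is not quasi prime: one has (q₁−q₂)*(q₁+q₂) = q₁²−q₂² ∈ I, but q₁−q₂ ∉ I and (q₁+q₂)^s ∉ I. -/

import Mathlib

/-- The quaternions ℍ. -/
abbrev Hq : Type := Quaternion ℝ

/-- The ring ℍ[q₁,…,qₙ] of slice regular polynomials in `n` quaternionic variables,
realized as the (noncommutative) monoid algebra over the multi-degrees `Fin n →₀ ℕ`:
the slice product satisfies `single m a * single l b = single (m+l) (a*b)`. -/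
abbrev SlicePoly (n : ℕ) : Type := AddMonoidAlgebra Hq (Fin n →₀ ℕ)

/-- A right ideal of a (possibly noncommutative) ring. -/
structure RightIdeal (R : Type) [Ring R] where
  carrier : Set R
  zero_mem : (0 : R) ∈ carrier
  add_mem : ∀ {x y : R}, x ∈ carrier → y ∈ carrier → x + y ∈ carrier
  mul_mem_right : ∀ {x : R} (y : R), x ∈ carrier → x * y ∈ carrier

/-- The right ideal generated by a set. -/
def RightIdeal.span {R : Type} [Ring R] (s : Set R) : RightIdeal R where
  carrier := {x | ∀ I : RightIdeal R, s ⊆ I.carrier → x ∈ I.carrier}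
  zero_mem := fun I _ => I.zero_mem
  add_mem := fun hx hy I hs => I.add_mem (hx I hs) (hy I hs)
  mul_mem_right := fun y hx I hs => I.mul_mem_right y (hx I hs)

/-- Evaluation of `P = Σ q₁^{ℓ₁}⋯qₙ^{ℓₙ} a_ℓ` at a point `a ∈ ℍⁿ`:
`P(a) = Σ a₁^{ℓ₁}⋯aₙ^{ℓₙ} a_ℓ` (ordered product of powers, coefficient on the right). -/
noncomputable def seval {n : ℕ} (P : SlicePoly n) (a : Fin n → Hq) : Hq :=
  ∑ m ∈ P.coeff.support, (List.ofFn fun i => a i ^ m i).prod * P.coeff m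

/-- The regular conjugate `P^c`, obtained by conjugating each coefficient. -/
noncomputable def rconj {n : ℕ} (P : SlicePoly n) : SlicePoly n :=
  ∑ m ∈ P.coeff.support, AddMonoidAlgebra.single m (star (P.coeff m))

/-- The symmetrization `P^s = P * P^c`. -/
noncomputable def ssymm {n : ℕ} (P : SlicePoly n) : SlicePoly n := P * rconj P

/-- `V(I)`: the common zero set of the polynomials in `I`. -/
def Vv {n : ℕ} (I : RightIdeal (SlicePoly n)) : Set (Fin n → Hq) :=
  {a | ∀ P ∈ I.carrier, seval P a = 0}

/-- The union `⋃_{K ∈ 𝕊} ℂ_Kⁿ` of the slices of `ℍⁿ`. -/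
def slicePoints (n : ℕ) : Set (Fin n → Hq) :=
  {a | ∃ K : Hq, K ^ 2 = -1 ∧ ∀ i, ∃ x y : ℝ, a i = (x : Hq) + (y : Hq) * K}

/-- `V_c(I) = V(I) ∩ ⋃_{K ∈ 𝕊} ℂ_Kⁿ`. -/
def Vc {n : ℕ} (I : RightIdeal (SlicePoly n)) : Set (Fin n → Hq) :=
  Vv I ∩ slicePoints n

/-- The spherical set `S_a = {(g⁻¹a₁g,…,g⁻¹aₙg) : g ∈ ℍ∖{0}}`. -/
def sphSet {n : ℕ} (a : Fin n → Hq) : Set (Fin n → Hq) :=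
  {b | ∃ g : Hq, g ≠ 0 ∧ b = fun i => g⁻¹ * a i * g}

/-- The symmetrization `S_E = ⋃_{a ∈ E} S_a` of a set `E ⊆ ℍⁿ`. -/
def symmSet {n : ℕ} (E : Set (Fin n → Hq)) : Set (Fin n → Hq) :=
  ⋃ a ∈ E, sphSet a

/-- A right ideal is proper and nontrivial. -/
def RightIdeal.ProperNontrivial {R : Type} [Ring R] (I : RightIdeal R) : Prop :=
  I.carrier ≠ Set.univ ∧ I.carrier ≠ {0}

/-- A right ideal `I` is quasi prime if `P*Q ∈ I` implies `P ∈ I` or `Q^s ∈ I`. -/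
def QuasiPrime {n : ℕ} (I : RightIdeal (SlicePoly n)) : Prop :=
  ∀ P Q : SlicePoly n, P * Q ∈ I.carrier → P ∈ I.carrier ∨ ssymm Q ∈ I.carrier

/-- A right ideal `I` is completely prime if `P*Q ∈ I` and `P*I ⊆ I` imply
`P ∈ I` or `Q ∈ I`. -/
def CompletelyPrime {n : ℕ} (I : RightIdeal (SlicePoly n)) : Prop :=
  ∀ P Q : SlicePoly n, P * Q ∈ I.carrier → (∀ R ∈ I.carrier, P * R ∈ I.carrier) →
    P ∈ I.carrier ∨ Q ∈ I.carrier

/-- The (right) radical `√I`: the intersection of all completely prime right ideals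
containing `I`. -/
def radicalSet {n : ℕ} (I : RightIdeal (SlicePoly n)) : Set (SlicePoly n) :=
  ⋂ J ∈ {J : RightIdeal (SlicePoly n) | CompletelyPrime J ∧ I.carrier ⊆ J.carrier}, J.carrier

/-- `I` is radical if `√I = I`. -/
def IsRadicalIdeal {n : ℕ} (I : RightIdeal (SlicePoly n)) : Prop :=
  radicalSet I = I.carrier

/-- The symmetrized ideal `S(I)`, the right ideal generated by `{P^s : P ∈ I}`. -/
noncomputable def symmIdeal {n : ℕ} (I : RightIdeal (SlicePoly n)) : RightIdeal (SlicePoly n) :=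
  RightIdeal.span {P | ∃ Q ∈ I.carrier, P = ssymm Q}

/-- `V_c(I)` is reducible: it is the union `V_c(I₁) ∪ V_c(I₂)` for two proper nontrivial
right ideals, neither contained in the other. -/
def VcReducible {n : ℕ} (I : RightIdeal (SlicePoly n)) : Prop :=
  ∃ I₁ I₂ : RightIdeal (SlicePoly n), I₁.ProperNontrivial ∧ I₂.ProperNontrivial ∧
    ¬ I₁.carrier ⊆ I₂.carrier ∧ ¬ I₂.carrier ⊆ I₁.carrier ∧
    Vc I = Vc I₁ ∪ Vc I₂

/-- The variable `q₁` in ℍ[q₁,q₂]. -/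
noncomputable def q1 : SlicePoly 2 := AddMonoidAlgebra.single (Finsupp.single 0 1) 1

/-- The variable `q₂` in ℍ[q₁,q₂]. -/
noncomputable def q2 : SlicePoly 2 := AddMonoidAlgebra.single (Finsupp.single 1 1) 1

/-!
Since `q₁`, `q₂` commute with each other and with the coefficients, sending them to two commuting
elements `x`, `y` of a ring that centralize the image of `ℍ` defines a ring homomorphism, and it
kills `I` as soon as `x² = y² = -1`. In `M₂(ℍ)` the matrix `J = [[0,-1],[1,0]]` is such an element.
Evaluating at `(J, -J)` sends `q₁ - q₂` to `2J ≠ 0`, and evaluating at `(J, J)` sends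
`(q₁ + q₂)^s = (q₁ + q₂)²` to `-4 ≠ 0`, so neither lies in `I`.
-/

instance : CharZero Hq := charZero_of_injective_algebraMap (FaithfulSMul.algebraMap_injective ℝ Hq)

namespace RightIdeal

variable {R : Type} [Ring R]

def ker {S : Type} [Ring S] (f : R →+* S) : RightIdeal R where
  carrier := {x | f x = 0}
  zero_mem := map_zero f
  add_mem hx hy := by simp_all
  mul_mem_right y hx := by simp_all

theorem subset_span (s : Set R) : s ⊆ (span s).carrier := fun _ hx _ hs => hs hx

theorem neg_mem (I : RightIdeal R) {x : R} (hx : x ∈ I.carrier) : -x ∈ I.carrier := by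
  simpa using I.mul_mem_right (-1) hx

theorem sub_mem (I : RightIdeal R) {x y : R} (hx : x ∈ I.carrier) (hy : y ∈ I.carrier) :
    x - y ∈ I.carrier := by
  simpa [sub_eq_add_neg] using I.add_mem hx (I.neg_mem hy)

theorem map_eq_zero_of_mem_span {S : Type} [Ring S] (f : R →+* S) {s : Set R}
    (hs : ∀ x ∈ s, f x = 0) {x : R} (hx : x ∈ (span s).carrier) : f x = 0 :=
  hx (ker f) hs

end RightIdeal

section Evaluation

variable {k S : Type} [Semiring k] [Semiring S]

def monomialEval {x y : S} (hxy : Commute x y) : Multiplicative (Fin 2 →₀ ℕ) →* S where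
  toFun m := x ^ m.toAdd 0 * y ^ m.toAdd 1
  map_one' := by simp
  map_mul' m m' := by
    simp only [toAdd_mul, Finsupp.add_apply, pow_add]
    exact (hxy.pow_pow _ _).mul_mul_mul_comm _ _

noncomputable def evalCommuting (f : k →+* S) {x y : S} (hxy : Commute x y)
    (hx : ∀ a, Commute (f a) x) (hy : ∀ a, Commute (f a) y) :
    AddMonoidAlgebra k (Fin 2 →₀ ℕ) →+* S :=
  AddMonoidAlgebra.liftNCRingHom f (monomialEval hxy)
    fun a _ => ((hx a).pow_right _).mul_right ((hy a).pow_right _)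

end Evaluation

section EvaluationQuaternion

variable {S : Type} [Ring S] (f : Hq →+* S) {x y : S} (hxy : Commute x y)
  (hx : ∀ a, Commute (f a) x) (hy : ∀ a, Commute (f a) y)

@[simp]
theorem evalCommuting_q1 : evalCommuting f hxy hx hy q1 = x := by
  simp [evalCommuting, q1, monomialEval]

@[simp]
theorem evalCommuting_q2 : evalCommuting f hxy hx hy q2 = y := by
  simp [evalCommuting, q2, monomialEval]

theorem evalCommuting_eq_zero_of_mem_span_sq_add_one (hx2 : x ^ 2 = -1) (hy2 : y ^ 2 = -1) {P : SlicePoly 2}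
    (hP : P ∈ (RightIdeal.span {q1 ^ 2 + 1, q2 ^ 2 + 1}).carrier) :
    evalCommuting f hxy hx hy P = 0 := by
  refine RightIdeal.map_eq_zero_of_mem_span _ ?_ hP
  rintro _ (rfl | rfl) <;> simp [hx2, hy2]

end EvaluationQuaternion

namespace Matrix

variable {k : Type} [Ring k]

def quarterTurn : Matrix (Fin 2) (Fin 2) k := !![0, -1; 1, 0]

theorem quarterTurn_sq : (quarterTurn : Matrix (Fin 2) (Fin 2) k) ^ 2 = -1 := by
  ext i j
  fin_cases i <;> fin_cases j <;> simp [quarterTurn, sq]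

theorem commute_scalar_quarterTurn (a : k) : Commute (scalar (Fin 2) a) quarterTurn := by
  rw [scalar_commute_iff]
  ext i j
  fin_cases i <;> fin_cases j <;> simp [quarterTurn]

theorem quarterTurn_add_self_ne_zero [CharZero k] :
    (quarterTurn + quarterTurn : Matrix (Fin 2) (Fin 2) k) ≠ 0 := by
  intro h
  simpa [quarterTurn, one_add_one_eq_two] using congrFun (congrFun h 1) 0

theorem quarterTurn_add_self_mul_self_ne_zero [CharZero k] :
    (quarterTurn + quarterTurn) * (quarterTurn + quarterTurn) ≠
      (0 : Matrix (Fin 2) (Fin 2) k) := by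
  intro h
  norm_num [quarterTurn, mul_apply] at h
  simpa using congrFun (congrFun h 0) 0

end Matrix

theorem commute_q1_q2 : Commute q1 q2 := by
  simp only [Commute, SemiconjBy, q1, q2, AddMonoidAlgebra.single_mul_single, add_comm]

theorem rconj_eq_self {n : ℕ} {P : SlicePoly n} (hP : ∀ m, star (P.coeff m) = P.coeff m) :
    rconj P = P := by
  simp_rw [rconj, hP, ← AddMonoidAlgebra.ofCoeff_single, ← AddMonoidAlgebra.ofCoeff_sum]
  exact congrArg _ (Finsupp.sum_single _)

theorem rconj_q1_add_q2 : rconj (q1 + q2) = q1 + q2 := by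
  classical
  refine rconj_eq_self fun m => ?_
  simp only [q1, q2, AddMonoidAlgebra.coeff_add, AddMonoidAlgebra.coeff_single, Finsupp.add_apply,
    Finsupp.single_apply]
  split_ifs <;> simp

theorem q1_sub_q2_mul_q1_add_q2 : (q1 - q2) * (q1 + q2) = q1 ^ 2 - q2 ^ 2 := by
  rw [sq, sq, commute_q1_q2.mul_self_sub_mul_self_eq']

theorem q1_sq_sub_q2_sq_mem :
    q1 ^ 2 - q2 ^ 2 ∈ (RightIdeal.span {q1 ^ 2 + 1, q2 ^ 2 + 1}).carrier := by
  have h := (RightIdeal.span {q1 ^ 2 + 1, q2 ^ 2 + 1}).sub_mem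
    (RightIdeal.subset_span _ (Set.mem_insert _ _))
    (RightIdeal.subset_span _ (Set.mem_insert_of_mem _ rfl))
  rwa [add_sub_add_right_eq_sub] at h

theorem q1_sub_q2_notMem : q1 - q2 ∉ (RightIdeal.span {q1 ^ 2 + 1, q2 ^ 2 + 1}).carrier := by
  intro h
  have := evalCommuting_eq_zero_of_mem_span_sq_add_one (Matrix.scalar (Fin 2)) (Commute.refl _).neg_right
    Matrix.commute_scalar_quarterTurn (fun a => (Matrix.commute_scalar_quarterTurn a).neg_right)
    Matrix.quarterTurn_sq (by rw [neg_sq, Matrix.quarterTurn_sq]) h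
  rw [map_sub, evalCommuting_q1, evalCommuting_q2, sub_neg_eq_add] at this
  exact Matrix.quarterTurn_add_self_ne_zero this

theorem ssymm_q1_add_q2_notMem :
    ssymm (q1 + q2) ∉ (RightIdeal.span {q1 ^ 2 + 1, q2 ^ 2 + 1}).carrier := by
  intro h
  have := evalCommuting_eq_zero_of_mem_span_sq_add_one (Matrix.scalar (Fin 2)) (Commute.refl _)
    Matrix.commute_scalar_quarterTurn Matrix.commute_scalar_quarterTurn
    Matrix.quarterTurn_sq Matrix.quarterTurn_sq h
  rw [ssymm, rconj_q1_add_q2, map_mul, map_add, evalCommuting_q1, evalCommuting_q2] at this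
  exact Matrix.quarterTurn_add_self_mul_self_ne_zero this

/-- The right ideal `I = ⟨q₁²+1, q₂²+1⟩` of ℍ[q₁,q₂] is not quasi prime:
`(q₁−q₂)*(q₁+q₂) = q₁²−q₂² ∈ I`, but `q₁−q₂ ∉ I` and `(q₁+q₂)^s ∉ I`. -/
theorem example_not_quasiPrime :
    (q1 - q2) * (q1 + q2) = q1 ^ 2 - q2 ^ 2 ∧
    q1 ^ 2 - q2 ^ 2 ∈ (RightIdeal.span {q1 ^ 2 + 1, q2 ^ 2 + 1}).carrier ∧
    q1 - q2 ∉ (RightIdeal.span {q1 ^ 2 + 1, q2 ^ 2 + 1}).carrier ∧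
    ssymm (q1 + q2) ∉ (RightIdeal.span {q1 ^ 2 + 1, q2 ^ 2 + 1}).carrier ∧
    ¬ QuasiPrime (RightIdeal.span {q1 ^ 2 + 1, q2 ^ 2 + 1}) := by
  refine ⟨q1_sub_q2_mul_q1_add_q2, q1_sq_sub_q2_sq_mem, q1_sub_q2_notMem,
    ssymm_q1_add_q2_notMem, fun hI => ?_⟩
  rcases hI _ _ (q1_sub_q2_mul_q1_add_q2 ▸ q1_sq_sub_q2_sq_mem) with h | h
  exacts [q1_sub_q2_notMem h, ssymm_q1_add_q2_notMem h]
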